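/- arXiv:0903.4014 — 5 statements merged into one kernel-verified Lean document; each statement's English description precedes it below -/
import Mathlib

section
/- Let U be a finite set, n a positive integer, 𝒜 a finite set of functions A : Uⁿ → Ū, p_A a probability distribution on 𝒜 satisfying condition (H4) with constants α_A, β_A ≥ 0, p_C the uniform distribution on Im 𝒜, and p_{AC} := p_A × p_C the independent joint distribution. Then for every nonempty subset T ⊆ Uⁿ, p_{AC}({(A,c) : T ∩ C_A(c) = ∅}) ≤ α_A − 1 + |Im 𝒜| (β_A + 1) / |T|. -/
open Finset Filter

attribute [local instance] Classical.propDecidable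

noncomputable section

/-- Shannon entropy (base 2) of a distribution on a finite type. -/
def ent {α : Type*} [Fintype α] (p : α → ℝ) : ℝ :=
  ∑ a, -(p a * Real.logb 2 (p a))

/-- Marginal on the first component of a joint distribution. -/
def margFst {α β : Type*} [Fintype α] [Fintype β] (p : α × β → ℝ) (a : α) : ℝ :=
  ∑ b, p (a, b)

/-- Marginal on the second component of a joint distribution. -/
def margSnd {α β : Type*} [Fintype α] [Fintype β] (p : α × β → ℝ) (b : β) : ℝ :=
  ∑ a, p (a, b)

/-- Conditional entropy H(first ∣ second) of a joint distribution. -/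
def condEnt {α β : Type*} [Fintype α] [Fintype β] (p : α × β → ℝ) : ℝ :=
  ent p - ent (margSnd p)

/-- Mutual information of a joint distribution. -/
def mutInfo {α β : Type*} [Fintype α] [Fintype β] (p : α × β → ℝ) : ℝ :=
  ent (margFst p) + ent (margSnd p) - ent p

/-- Conditional probability P(first = a ∣ second = b) of a joint distribution. -/
def condProb {α β : Type*} [Fintype α] [Fintype β] (p : α × β → ℝ) (a : α) (b : β) : ℝ :=
  p (a, b) / margSnd p b

/-- Kullback-Leibler divergence (base 2). -/
def klDiv {α : Type*} [Fintype α] (p q : α → ℝ) : ℝ :=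
  ∑ a, p a * Real.logb 2 (p a / q a)

/-- Conditional KL divergence D(p_{2|1} ‖ q ∣ p_1) computed from the joint p. -/
def condKLDiv {α β : Type*} [Fintype α] [Fintype β] (p : α × β → ℝ) (q : α → β → ℝ) : ℝ :=
  ∑ ab : α × β, p ab * Real.logb 2 (p ab / margFst p ab.1 / q ab.1 ab.2)

/-- Empirical type of a sequence. -/
def typeOf {α : Type*} [Fintype α] {n : ℕ} (x : Fin n → α) (a : α) : ℝ :=
  ((Finset.univ.filter fun i => x i = a).card : ℝ) / n

/-- Joint empirical type of a pair of sequences. -/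
def jointType {α β : Type*} [Fintype α] [Fintype β] {n : ℕ}
    (x : Fin n → α) (y : Fin n → β) (ab : α × β) : ℝ :=
  ((Finset.univ.filter fun i => x i = ab.1 ∧ y i = ab.2).card : ℝ) / n

/-- Empirical conditional entropy H(x ∣ y). -/
def empCondEnt {α β : Type*} [Fintype α] [Fintype β] {n : ℕ}
    (x : Fin n → α) (y : Fin n → β) : ℝ :=
  condEnt (jointType x y)

/-- A minimizer of `f` on `s` (arbitrary if `s` is empty). -/
def argminOn {α : Type*} [Nonempty α] (s : Finset α) (f : α → ℝ) : α :=
  if h : s.Nonempty then (s.exists_min_image f h).choose else Classical.arbitrary α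

/-- A maximizer of `f` on `s` (arbitrary if `s` is empty). -/
def argmaxOn {α : Type*} [Nonempty α] (s : Finset α) (f : α → ℝ) : α :=
  argminOn s fun a => -f a

/-- The image `Im 𝒜` of a finite family of functions. -/
def ImSet {ι κ V : Type*} [Fintype κ] (𝒜 : Finset ι) (app : ι → κ → V) : Finset V :=
  𝒜.biUnion fun A => Finset.univ.image (app A)

/-- Condition (H4) of the hash property, for a fixed block length `n`. -/
def H4Cond {U V ι : Type*} [Fintype U] {n : ℕ}
    (𝒜 : Finset ι) (app : ι → (Fin n → U) → V) (p : ι → ℝ) (a b : ℝ) : Prop :=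
  ∀ T T' : Finset (Fin n → U),
    ∑ u ∈ T, ∑ u' ∈ T', (∑ A ∈ 𝒜.filter fun A => app A u = app A u', p A)
      ≤ ((T ∩ T').card : ℝ)
        + ((T.card : ℝ) * (T'.card : ℝ) * a) / ((ImSet 𝒜 app).card : ℝ)
        + min (T.card : ℝ) (T'.card : ℝ) * b

/-- The (α,β)-hash property of an ensemble of functions. -/
def HashProperty {U : Type*} [Fintype U] {ι : ℕ → Type*} {V : ℕ → Type*}
    [∀ n, Fintype (V n)]
    (𝒜 : ∀ n, Finset (ι n)) (app : ∀ n, ι n → (Fin n → U) → V n)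
    (p : ∀ n, ι n → ℝ) (a b : ℕ → ℝ) : Prop :=
  Tendsto (fun n : ℕ =>
      Real.logb 2 ((Fintype.card (V n) : ℝ) / ((ImSet (𝒜 n) (app n)).card : ℝ)) / (n : ℝ))
    atTop (nhds 0)
  ∧ Tendsto a atTop (nhds 1)
  ∧ Tendsto b atTop (nhds 0)
  ∧ ∀ n, H4Cond (𝒜 n) (app n) (p n) (a n) (b n)

/-- An ensemble has a hash property if it is an (α,β)-hash ensemble for some α, β. -/
def HasHashProperty {U : Type*} [Fintype U] {ι : ℕ → Type*} {V : ℕ → Type*}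
    [∀ n, Fintype (V n)]
    (𝒜 : ∀ n, Finset (ι n)) (app : ∀ n, ι n → (Fin n → U) → V n)
    (p : ∀ n, ι n → ℝ) : Prop :=
  ∃ a b : ℕ → ℝ, HashProperty 𝒜 app p a b

/-- Uniform distribution on a finite subset. -/
def unifOn {V : Type*} (s : Finset V) (v : V) : ℝ :=
  if v ∈ s then 1 / (s.card : ℝ) else 0

end

/-- Lemma 2: if (𝒜, p_A) satisfies (H4) with constants α_A, β_A ≥ 0,
with C uniform on Im 𝒜 and independent of A, then for every nonempty T,
p_{AC}({(A,c) : T ∩ C_A(c) = ∅}) ≤ α_A − 1 + |Im 𝒜| (β_A + 1) / |T|. -/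
theorem stmt2 {U V : Type} [Fintype U] (n : ℕ)
    (𝒜 : Finset ((Fin n → U) → V)) (pA : ((Fin n → U) → V) → ℝ)
    (hnn : ∀ A, 0 ≤ pA A) (hsum : ∑ A ∈ 𝒜, pA A = 1)
    (αA βA : ℝ) (hα : 0 ≤ αA) (hβ : 0 ≤ βA)
    (hH4 : H4Cond 𝒜 id pA αA βA)
    (T : Finset (Fin n → U)) (hT : T.Nonempty) :
    ∑ A ∈ 𝒜, ∑ c ∈ ImSet 𝒜 id,
        pA A * unifOn (ImSet 𝒜 id) c * (if ∀ u ∈ T, A u ≠ c then 1 else 0)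
      ≤ αA - 1 + ((ImSet 𝒜 id).card : ℝ) * (βA + 1) / (T.card : ℝ) := by
  classical
  have hA : 𝒜.Nonempty := by
    rcases Finset.eq_empty_or_nonempty 𝒜 with h | h
    · rw [h] at hsum; simp at hsum
    · exact h
  obtain ⟨u₀, hu₀⟩ := hT
  have hmemS : ∀ A ∈ 𝒜, ∀ u : Fin n → U, A u ∈ ImSet 𝒜 id := by
    intro A hAm u
    exact Finset.mem_biUnion.2 ⟨A, hAm, Finset.mem_image.2 ⟨u, Finset.mem_univ u, rfl⟩⟩
  have hSne : (ImSet 𝒜 id).Nonempty := ⟨hA.choose u₀, hmemS _ hA.choose_spec u₀⟩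
  set s : ℝ := ((ImSet 𝒜 id).card : ℝ) with hs_def
  set t : ℝ := (T.card : ℝ) with ht_def
  have hs : 0 < s := by rw [hs_def]; exact Nat.cast_pos.2 (Finset.card_pos.2 hSne)
  have ht : 0 < t := by rw [ht_def]; exact Nat.cast_pos.2 (Finset.card_pos.2 ⟨u₀, hu₀⟩)
  set D : ℝ := s * (1 + βA) + t * αA with hD_def
  have hD : 0 < D := by nlinarith
  set lam : ℝ := s / D with hlam_def
  set N : ((Fin n → U) → V) → V → ℝ :=
    fun A c => ((T.filter fun u => A u = c).card : ℝ) with hN_def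
  set M : ((Fin n → U) → V) → ℝ :=
    fun A => ∑ u ∈ T, ∑ u' ∈ T, (if A u = A u' then (1 : ℝ) else 0) with hM_def
  -- Step 1: pointwise bound of the indicator by a square
  have step1 : ∑ A ∈ 𝒜, ∑ c ∈ ImSet 𝒜 id,
      pA A * unifOn (ImSet 𝒜 id) c * (if ∀ u ∈ T, A u ≠ c then 1 else 0)
      ≤ ∑ A ∈ 𝒜, pA A * (1/s) * ∑ c ∈ ImSet 𝒜 id, (1 - lam * N A c)^2 := by
    apply Finset.sum_le_sum
    intro A hAm
    rw [Finset.mul_sum]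
    apply Finset.sum_le_sum
    intro c hc
    have hunif : unifOn (ImSet 𝒜 id) c = 1/s := by
      rw [unifOn, if_pos hc]
    have hind : (if ∀ u ∈ T, A u ≠ c then (1:ℝ) else 0) ≤ (1 - lam * N A c)^2 := by
      by_cases h : ∀ u ∈ T, A u ≠ c
      · have hN0 : N A c = 0 := by
          simp only [hN_def]
          norm_cast
          rw [Finset.card_eq_zero, Finset.filter_eq_empty_iff]
          exact h
        rw [if_pos h, hN0]; norm_num
      · rw [if_neg h]; positivity
    rw [hunif]
    exact mul_le_mul_of_nonneg_left hind (mul_nonneg (hnn A) (by positivity))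
  -- Step 2: evaluate the inner sum
  have expand : ∀ A ∈ 𝒜, ∑ c ∈ ImSet 𝒜 id, (1 - lam * N A c)^2
      = s - 2*lam*t + lam^2 * M A := by
    intro A hAm
    have hNrep : ∀ c, N A c = ∑ u ∈ T, (if A u = c then (1:ℝ) else 0) := by
      intro c
      simp only [hN_def]
      rw [Finset.sum_boole]
    have hsumN : ∑ c ∈ ImSet 𝒜 id, N A c = t := by
      simp only [hN_def]
      rw [ht_def, Finset.card_eq_sum_card_fiberwise (fun u _ => hmemS A hAm u),
        Nat.cast_sum]
    have hsq : ∑ c ∈ ImSet 𝒜 id, (N A c)^2 = M A := by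
      have h1 : ∀ c, (N A c)^2 = ∑ u ∈ T, ∑ u' ∈ T,
          (if A u = c then (1:ℝ) else 0) * (if A u' = c then 1 else 0) := by
        intro c
        rw [hNrep c, sq, Finset.sum_mul_sum]
      rw [Finset.sum_congr rfl (fun c _ => h1 c), Finset.sum_comm]
      apply Finset.sum_congr rfl
      intro u hu
      rw [Finset.sum_comm]
      apply Finset.sum_congr rfl
      intro u' hu'
      rw [Finset.sum_eq_single (A u)]
      · by_cases h : A u = A u'
        · simp [h]
        · have h' : ¬ (A u' = A u) := fun hh => h hh.symm
          simp [h, h']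
      · intro b _ hb
        simp [Ne.symm hb]
      · intro hnot
        exact absurd (hmemS A hAm u) hnot
    calc ∑ c ∈ ImSet 𝒜 id, (1 - lam * N A c)^2
        = ∑ c ∈ ImSet 𝒜 id, (1 - 2*lam*(N A c) + lam^2 * (N A c)^2) := by
          apply Finset.sum_congr rfl; intro c _; ring
      _ = (((ImSet 𝒜 id).card : ℝ)) - 2*lam*(∑ c ∈ ImSet 𝒜 id, N A c)
            + lam^2 * ∑ c ∈ ImSet 𝒜 id, (N A c)^2 := by
          rw [Finset.sum_add_distrib, Finset.sum_sub_distrib, ← Finset.mul_sum,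
            ← Finset.mul_sum, Finset.sum_const, nsmul_eq_mul, mul_one]
      _ = s - 2*lam*t + lam^2 * M A := by rw [hsumN, hsq]
  -- Step 3: H4 bound on the expected collision count
  have hE : ∑ A ∈ 𝒜, pA A * M A ≤ t + t*t*αA/s + t*βA := by
    have hswap : ∑ A ∈ 𝒜, pA A * M A
        = ∑ u ∈ T, ∑ u' ∈ T, (∑ A ∈ 𝒜.filter fun A => A u = A u', pA A) := by
      simp only [hM_def, Finset.mul_sum]
      rw [Finset.sum_comm]
      apply Finset.sum_congr rfl
      intro u hu
      rw [Finset.sum_comm]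
      apply Finset.sum_congr rfl
      intro u' hu'
      rw [Finset.sum_filter]
      apply Finset.sum_congr rfl
      intro A hAm
      by_cases h : A u = A u' <;> simp [h]
    have h4 := hH4 T T
    rw [Finset.inter_self, min_self] at h4
    simp only [id_eq] at h4
    rw [hswap]
    calc ∑ u ∈ T, ∑ u' ∈ T, (∑ A ∈ 𝒜.filter fun A => A u = A u', pA A)
        ≤ (T.card : ℝ) + ((T.card : ℝ) * (T.card : ℝ) * αA) / ((ImSet 𝒜 id).card : ℝ)
          + (T.card : ℝ) * βA := h4
      _ = t + t*t*αA/s + t*βA := by rw [← ht_def, ← hs_def]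
  -- Combine
  have step3 : ∑ A ∈ 𝒜, pA A * (1/s) * ∑ c ∈ ImSet 𝒜 id, (1 - lam * N A c)^2
      ≤ (1 - 2*lam*t/s) + (lam^2/s) * (t + t*t*αA/s + t*βA) := by
    have heq : ∑ A ∈ 𝒜, pA A * (1/s) * ∑ c ∈ ImSet 𝒜 id, (1 - lam * N A c)^2
        = (1 - 2*lam*t/s) + (lam^2/s) * ∑ A ∈ 𝒜, pA A * M A := by
      rw [Finset.sum_congr rfl (fun A hAm => by rw [expand A hAm]),
        Finset.mul_sum]
      have : ∀ A ∈ 𝒜, pA A * (1/s) * (s - 2*lam*t + lam^2 * M A)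
          = pA A * (1 - 2*lam*t/s) + (lam^2/s) * (pA A * M A) := by
        intro A _
        field_simp
      rw [Finset.sum_congr rfl this, Finset.sum_add_distrib, ← Finset.sum_mul, hsum,
        one_mul]
    rw [heq]
    have : (lam^2/s) * ∑ A ∈ 𝒜, pA A * M A ≤ (lam^2/s) * (t + t*t*αA/s + t*βA) :=
      mul_le_mul_of_nonneg_left hE (by positivity)
    linarith
  -- Final algebra
  clear_value N M lam D t s
  have hs0 : s ≠ 0 := ne_of_gt hs
  have ht0 : t ≠ 0 := ne_of_gt ht
  have hD0 : D ≠ 0 := ne_of_gt hD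
  have halg1 : (1 - 2*lam*t/s) + (lam^2/s) * (t + t*t*αA/s + t*βA) = 1 - t/D := by
    rw [hlam_def]
    field_simp
    ring_nf
    rw [hD_def]
    ring
  have halg2 : 1 - t/D ≤ αA - 1 + s * (βA + 1) / t := by
    have h1 : αA - 1 + s * (βA + 1) / t = (D - t)/t := by
      rw [hD_def]; field_simp; ring
    have h2 : 1 - t/D = (D - t)/D := by field_simp
    rw [h1, h2, div_le_div_iff₀ hD ht]
    nlinarith [sq_nonneg (D - t)]
  calc ∑ A ∈ 𝒜, ∑ c ∈ ImSet 𝒜 id,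
        pA A * unifOn (ImSet 𝒜 id) c * (if ∀ u ∈ T, A u ≠ c then 1 else 0)
      ≤ ∑ A ∈ 𝒜, pA A * (1/s) * ∑ c ∈ ImSet 𝒜 id, (1 - lam * N A c)^2 := step1
    _ ≤ (1 - 2*lam*t/s) + (lam^2/s) * (t + t*t*αA/s + t*βA) := step3
    _ = 1 - t/D := halg1
    _ ≤ αA - 1 + s * (βA + 1) / t := halg2
end

section
/- (Lemma 5.) Let (X,Z) be a pair of random variables with finite alphabets X and Z and joint distribution μ_{XZ}. Suppose I(X;Z) ≤ R and let ε > 0 be such that R + ε ≤ H(X). Then there exist a random variable Z̃ taking values in X × Z, defined jointly with (X,Z) (i.e., a joint distribution of (X,Z,Z̃) whose (X,Z)-marginal is μ_{XZ}), and a function f : X × Z → Z such that I(X;Z̃) = R + ε and Z = f(Z̃) with probability one. -/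
open Finset Filter

attribute [local instance] Classical.propDecidable

section aux9

lemma aux_cont9 : Continuous fun x : ℝ => -(x * Real.logb 2 x) := by
  have h : (fun x : ℝ => -(x * Real.logb 2 x)) = fun x => -((x * Real.log x) * (Real.log 2)⁻¹) := by
    funext x
    rw [Real.logb, div_eq_mul_inv]
    ring
  rw [h]
  exact (Real.continuous_mul_log.mul continuous_const).neg

lemma ent_cont9 {α : Type*} [Fintype α] (g : ℝ → α → ℝ) (h : ∀ a, Continuous fun s => g s a) :
    Continuous fun s => ent (g s) := by
  simp only [ent]
  exact continuous_finset_sum _ fun a _ => aux_cont9.comp (h a)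

lemma sum_phi_ite9 {α : Type*} [Fintype α] (c : ℝ) (x : α) :
    ∑ x' : α, -((c * if x' = x then 1 else 0) * Real.logb 2 (c * if x' = x then 1 else 0))
      = -(c * Real.logb 2 c) := by
  have h : ∀ x' : α, -((c * if x' = x then 1 else 0) * Real.logb 2 (c * if x' = x then 1 else 0))
      = if x' = x then -(c * Real.logb 2 c) else 0 := by
    intro x'; split_ifs <;> simp
  simp [h]

lemma ent_aux9 {X Z : Type} [Fintype X] [Fintype Z] (μ : X × Z → ℝ) (g : X → X) :
    ent (fun p : X × (X × Z) => μ (p.1, p.2.2) * if p.2.1 = g p.1 then 1 else 0) = ent μ := by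
  simp only [ent]
  rw [Fintype.sum_prod_type]
  have h : ∀ x : X,
      (∑ b : X × Z, -((μ (x, b.2) * if b.1 = g x then 1 else 0) *
        Real.logb 2 (μ (x, b.2) * if b.1 = g x then 1 else 0)))
      = ∑ z : Z, -(μ (x, z) * Real.logb 2 (μ (x, z))) := by
    intro x
    rw [Fintype.sum_prod_type, Finset.sum_comm]
    exact Finset.sum_congr rfl fun z _ => sum_phi_ite9 (μ (x, z)) (g x)
  rw [Finset.sum_congr rfl fun x _ => h x, ← Fintype.sum_prod_type']

lemma ent_aux2_9 {X Z : Type} [Fintype X] [Fintype Z] (ν : Z → ℝ) (x0 : X) :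
    ent (fun b : X × Z => ν b.2 * if b.1 = x0 then 1 else 0) = ent ν := by
  simp only [ent]
  rw [Fintype.sum_prod_type, Finset.sum_comm]
  exact Finset.sum_congr rfl fun z _ => sum_phi_ite9 (ν z) x0

end aux9

/-- Lemma 5: if I(X;Z) ≤ R and R + ε ≤ H(X) with ε > 0, then there are a
random variable Z̃ with values in X × Z defined jointly with (X,Z) and a function
f : X × Z → Z such that I(X;Z̃) = R + ε and Z = f(Z̃) with probability one. -/
theorem stmt9 {X Z : Type} [Fintype X] [Fintype Z]
    (μXZ : X × Z → ℝ) (hnn : ∀ p, 0 ≤ μXZ p) (hsum : ∑ p : X × Z, μXZ p = 1)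
    (R ε : ℝ) (hε : 0 < ε)
    (hIR : mutInfo μXZ ≤ R) (hRH : R + ε ≤ ent (margFst μXZ)) :
    ∃ (q : X × Z × (X × Z) → ℝ) (f : X × Z → Z),
      (∀ p, 0 ≤ q p) ∧ (∑ p : X × Z × (X × Z), q p = 1) ∧
      (∀ x z, ∑ zt : X × Z, q (x, z, zt) = μXZ (x, z)) ∧
      mutInfo (fun p : X × (X × Z) => ∑ z, q (p.1, z, p.2)) = R + ε ∧
      (∀ x z zt, 0 < q (x, z, zt) → f zt = z) := by
  classical
  have hX : Nonempty X := by
    rcases isEmpty_or_nonempty X with h | h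
    · haveI : IsEmpty (X × Z) := ⟨fun p => h.false p.1⟩
      simp at hsum
    · exact h
  obtain ⟨x0⟩ := hX
  set W : ℝ → X → X → ℝ := fun s x x' =>
    s * (if x' = x then 1 else 0) + (1 - s) * (if x' = x0 then 1 else 0) with hW
  have hWsum : ∀ (s : ℝ) (x : X), ∑ x' : X, W s x x' = 1 := by
    intro s x
    simp [hW, Finset.sum_add_distrib, ← Finset.mul_sum]
  have hWsum' : ∀ (s : ℝ) (x : X) (c : ℝ), ∑ x' : X, c * W s x x' = c := by
    intro s x c; rw [← Finset.mul_sum, hWsum, mul_one]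
  set r : ℝ → X × (X × Z) → ℝ := fun s p => μXZ (p.1, p.2.2) * W s p.1 p.2.1 with hr
  have hmargFst : ∀ s, margFst (r s) = margFst μXZ := by
    intro s; funext a
    simp only [margFst, hr]
    rw [Fintype.sum_prod_type, Finset.sum_comm]
    exact Finset.sum_congr rfl fun z _ => hWsum' s a (μXZ (a, z))
  have hWc : ∀ x x', Continuous fun s => W s x x' := by
    intro x x'; simp only [hW]; fun_prop
  have hrc : ∀ p, Continuous fun s => r s p := by
    intro p; simp only [hr]; exact continuous_const.mul (hWc _ _)
  have hmFc : Continuous fun s => ent (margFst (r s)) := by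
    apply ent_cont9; intro a
    simp only [margFst]
    exact continuous_finset_sum _ fun b _ => hrc (a, b)
  have hmSc : Continuous fun s => ent (margSnd (r s)) := by
    apply ent_cont9; intro b
    simp only [margSnd]
    exact continuous_finset_sum _ fun a _ => hrc (a, b)
  have hec : Continuous fun s => ent (r s) := ent_cont9 _ hrc
  have hFc : Continuous fun s => mutInfo (r s) := by
    simp only [mutInfo]; exact (hmFc.add hmSc).sub hec
  have hr1 : r 1 = fun p : X × (X × Z) => μXZ (p.1, p.2.2) * if p.2.1 = p.1 then 1 else 0 := by
    funext p; simp [hr, hW]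
  have hr0 : r 0 = fun p : X × (X × Z) => μXZ (p.1, p.2.2) * if p.2.1 = x0 then 1 else 0 := by
    funext p; simp [hr, hW]
  have hF1 : mutInfo (r 1) = ent (margFst μXZ) := by
    have hms : margSnd (r 1) = μXZ := by
      funext b
      simp only [margSnd, hr1]
      simp
    have he : ent (r 1) = ent μXZ := by rw [hr1]; exact ent_aux9 μXZ id
    rw [mutInfo, hmargFst, hms, he]; ring
  have hF0 : mutInfo (r 0) = mutInfo μXZ := by
    have hms : margSnd (r 0) = fun b : X × Z => margSnd μXZ b.2 * if b.1 = x0 then 1 else 0 := by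
      funext b
      simp only [margSnd, hr0]
      rw [Finset.sum_mul]
    have he : ent (r 0) = ent μXZ := by rw [hr0]; exact ent_aux9 μXZ (fun _ => x0)
    rw [mutInfo, hmargFst, hms, ent_aux2_9, he, mutInfo]
  have hmem : R + ε ∈ Set.Icc (mutInfo (r 0)) (mutInfo (r 1)) := by
    rw [hF0, hF1]
    exact ⟨by linarith, hRH⟩
  obtain ⟨t, htmem, hFt⟩ := intermediate_value_Icc zero_le_one hFc.continuousOn hmem
  obtain ⟨ht0, ht1⟩ := htmem
  have hWnn : ∀ x x', 0 ≤ W t x x' := by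
    intro x x'
    simp only [hW]
    have h1 : (0:ℝ) ≤ if x' = x then (1:ℝ) else 0 := by split_ifs <;> norm_num
    have h2 : (0:ℝ) ≤ if x' = x0 then (1:ℝ) else 0 := by split_ifs <;> norm_num
    exact add_nonneg (mul_nonneg ht0 h1) (mul_nonneg (by linarith) h2)
  have key : ∀ (x : X) (z : Z),
      ∑ zt : X × Z, μXZ (x, z) * (if zt.2 = z then (1:ℝ) else 0) * W t x zt.1 = μXZ (x, z) := by
    intro x z
    rw [Fintype.sum_prod_type, Finset.sum_comm]
    have h : ∀ z' : Z, (∑ x' : X, μXZ (x, z) * (if z' = z then (1:ℝ) else 0) * W t x x')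
        = if z' = z then μXZ (x, z) else 0 := by
      intro z'
      split_ifs with hzz
      · simp only [mul_one]; exact hWsum' t x (μXZ (x, z))
      · simp
    simp [h, hWsum' t x]
  refine ⟨fun p => μXZ (p.1, p.2.1) * (if p.2.2.2 = p.2.1 then 1 else 0) * W t p.1 p.2.2.1,
    Prod.snd, ?_, ?_, ?_, ?_, ?_⟩
  · intro p
    have h1 : (0:ℝ) ≤ if p.2.2.2 = p.2.1 then (1:ℝ) else 0 := by split_ifs <;> norm_num
    exact mul_nonneg (mul_nonneg (hnn _) h1) (hWnn _ _)
  · calc (∑ p : X × Z × (X × Z), μXZ (p.1, p.2.1) * (if p.2.2.2 = p.2.1 then (1:ℝ) else 0) * W t p.1 p.2.2.1)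
        = ∑ x, ∑ z, ∑ zt : X × Z, μXZ (x, z) * (if zt.2 = z then (1:ℝ) else 0) * W t x zt.1 := by
          rw [Fintype.sum_prod_type]
          exact Finset.sum_congr rfl fun x _ => Fintype.sum_prod_type _
      _ = ∑ x, ∑ z, μXZ (x, z) := by
          exact Finset.sum_congr rfl fun x _ => Finset.sum_congr rfl fun z _ => key x z
      _ = 1 := by rw [← Fintype.sum_prod_type']; simpa using hsum
  · intro x z
    exact key x z
  · have hqr : (fun p : X × (X × Z) =>
        ∑ z, μXZ (p.1, z) * (if p.2.2 = z then (1:ℝ) else 0) * W t p.1 p.2.1) = r t := by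
      funext p
      have h : ∀ z : Z, μXZ (p.1, z) * (if p.2.2 = z then (1:ℝ) else 0) * W t p.1 p.2.1
          = if p.2.2 = z then μXZ (p.1, z) * W t p.1 p.2.1 else 0 := fun z => by
        split_ifs <;> ring
      simp only [h]
      rw [Finset.sum_ite_eq]
      simp [hr]
    show mutInfo (fun p : X × (X × Z) =>
        ∑ z, μXZ (p.1, z) * (if p.2.2 = z then (1:ℝ) else 0) * W t p.1 p.2.1) = R + ε
    rw [hqr]
    exact hFt
  · intro x z zt hq
    by_contra hne
    change ¬ zt.2 = z at hne
    simp [hne] at hq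
end

section
/- (Lemma 8.) Let (X,Z) be a pair of random variables with finite alphabets X and Z and joint distribution μ_{XZ}. Suppose H(X|Z) ≥ R and let ε satisfy 0 < ε ≤ R. Then there exist a random variable Z̃ taking values in X × Z, defined jointly with (X,Z) (i.e., a joint distribution of (X,Z,Z̃) whose (X,Z)-marginal is μ_{XZ}), and a function f : X × Z → Z such that H(X|Z̃) = R − ε and Z = f(Z̃) with probability one. -/
open Finset Filter

attribute [local instance] Classical.propDecidable

noncomputable section Aux

lemma contPhi : Continuous fun x : ℝ => x * Real.logb 2 x := by
  have h : (fun x : ℝ => x * Real.logb 2 x) = fun x => (x * Real.log x) / Real.log 2 := by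
    ext x; simp [Real.logb]; ring
  rw [h]
  exact Real.continuous_mul_log.div_const _

lemma cont_ent_comp {α : Type*} [Fintype α] {f : ℝ → α → ℝ}
    (hf : ∀ a, Continuous fun l => f l a) :
    Continuous fun l => ent (f l) := by
  unfold ent
  exact continuous_finset_sum _ fun a _ => (contPhi.comp (hf a)).neg

/-- mixing coefficient -/
def coefC {X : Type} (x₀ : X) (l : ℝ) (x x' : X) : ℝ :=
  (if x' = x then (1:ℝ) else 0) * l + (if x' = x₀ then (1:ℝ) else 0) * (1 - l)

lemma coefC_cont {X : Type} (x₀ x x' : X) : Continuous fun l => coefC x₀ l x x' := by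
  unfold coefC; fun_prop

lemma coefC_nonneg {X : Type} (x₀ : X) {l : ℝ} (h0 : 0 ≤ l) (h1 : l ≤ 1) (x x' : X) :
    0 ≤ coefC x₀ l x x' := by
  unfold coefC
  have : (0:ℝ) ≤ 1 - l := by linarith
  positivity

lemma coefC_sum {X : Type} [Fintype X] (x₀ : X) (l : ℝ) (x : X) :
    ∑ x', coefC x₀ l x x' = 1 := by
  unfold coefC
  rw [Finset.sum_add_distrib]
  simp [ite_mul, zero_mul, one_mul, Finset.sum_ite_eq']

lemma coefC_one {X : Type} (x₀ : X) (x x' : X) :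
    coefC x₀ 1 x x' = if x' = x then (1:ℝ) else 0 := by
  simp [coefC]

lemma coefC_zero {X : Type} (x₀ : X) (x x' : X) :
    coefC x₀ 0 x x' = if x' = x₀ then (1:ℝ) else 0 := by
  simp [coefC]

/-- joint distribution of (X, Z̃) -/
def rJoint {X Z : Type} (μ : X × Z → ℝ) (x₀ : X) (l : ℝ) (p : X × (X × Z)) : ℝ :=
  coefC x₀ l p.1 p.2.1 * μ (p.1, p.2.2)

lemma ite_neg_mul_logb (c : Prop) [Decidable c] (m : ℝ) :
    -((if c then m else 0) * Real.logb 2 (if c then m else 0))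
      = if c then -(m * Real.logb 2 m) else 0 := by
  split_ifs <;> simp

lemma rJoint_cont {X Z : Type} [Fintype X] [Fintype Z] (μ : X × Z → ℝ) (x₀ : X) :
    Continuous fun l => condEnt (rJoint μ x₀ l) := by
  unfold condEnt
  apply Continuous.sub
  · exact cont_ent_comp fun p => (coefC_cont x₀ p.1 p.2.1).mul continuous_const
  · refine cont_ent_comp fun b => ?_
    unfold margSnd
    exact continuous_finset_sum _ fun x _ =>
      (coefC_cont x₀ x b.1).mul continuous_const

lemma condEnt_rJoint_one {X Z : Type} [Fintype X] [Fintype Z] (μ : X × Z → ℝ) (x₀ : X) :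
    condEnt (rJoint μ x₀ 1) = 0 := by
  have hm : margSnd (rJoint μ x₀ 1) = fun q => μ q := by
    funext q
    obtain ⟨x', z'⟩ := q
    simp [margSnd, rJoint, coefC_one, ite_mul, one_mul, zero_mul, Finset.sum_ite_eq']
  have he : ent (rJoint μ x₀ 1) = ent μ := by
    unfold ent rJoint
    rw [Fintype.sum_prod_type]
    simp only [coefC_one, ite_mul, one_mul, zero_mul]
    rw [show (∑ a, -(μ a * Real.logb 2 (μ a)))
        = ∑ x : X, ∑ z' : Z, -(μ (x, z') * Real.logb 2 (μ (x, z'))) from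
      Fintype.sum_prod_type _]
    refine Finset.sum_congr rfl fun x _ => ?_
    rw [Fintype.sum_prod_type]
    simp [ite_neg_mul_logb, Finset.sum_ite_eq']
  unfold condEnt
  rw [he, hm]
  simp [ent]

lemma condEnt_rJoint_zero {X Z : Type} [Fintype X] [Fintype Z] (μ : X × Z → ℝ) (x₀ : X) :
    condEnt (rJoint μ x₀ 0) = condEnt μ := by
  have hm : margSnd (rJoint μ x₀ 0) = fun q : X × Z =>
      if q.1 = x₀ then margSnd μ q.2 else 0 := by
    funext q
    obtain ⟨x', z'⟩ := q
    simp only [margSnd, rJoint, coefC_zero, ite_mul, one_mul, zero_mul]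
    split_ifs <;> simp
  have he : ent (rJoint μ x₀ 0) = ent μ := by
    unfold ent rJoint
    rw [Fintype.sum_prod_type]
    rw [show (∑ a, -(μ a * Real.logb 2 (μ a)))
        = ∑ x : X, ∑ z' : Z, -(μ (x, z') * Real.logb 2 (μ (x, z'))) from
      Fintype.sum_prod_type _]
    refine Finset.sum_congr rfl fun x _ => ?_
    rw [Fintype.sum_prod_type]
    simp only [coefC_zero, ite_mul, one_mul, zero_mul]
    rw [Finset.sum_comm]
    simp [ite_neg_mul_logb, Finset.sum_ite_eq']
  have hm2 : ent (margSnd (rJoint μ x₀ 0)) = ent (margSnd μ) := by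
    rw [hm]
    unfold ent
    rw [Fintype.sum_prod_type]
    simp [ite_neg_mul_logb, Finset.sum_ite_eq']
  unfold condEnt
  rw [he, hm2]

end Aux

/-- Lemma 8: if H(X|Z) ≥ R and 0 < ε ≤ R, then there are a random
variable Z̃ with values in X × Z defined jointly with (X,Z) and a function
f : X × Z → Z such that H(X|Z̃) = R − ε and Z = f(Z̃) with probability one. -/
theorem stmt12 {X Z : Type} [Fintype X] [Fintype Z]
    (μXZ : X × Z → ℝ) (hnn : ∀ p, 0 ≤ μXZ p) (hsum : ∑ p : X × Z, μXZ p = 1)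
    (R ε : ℝ) (hε : 0 < ε) (hεR : ε ≤ R)
    (hHR : condEnt μXZ ≥ R) :
    ∃ (q : X × Z × (X × Z) → ℝ) (f : X × Z → Z),
      (∀ p, 0 ≤ q p) ∧ (∑ p : X × Z × (X × Z), q p = 1) ∧
      (∀ x z, ∑ zt : X × Z, q (x, z, zt) = μXZ (x, z)) ∧
      condEnt (fun p : X × (X × Z) => ∑ z, q (p.1, z, p.2)) = R - ε ∧
      (∀ x z zt, 0 < q (x, z, zt) → f zt = z) := by
  classical
  -- X is nonempty
  have hXne : Nonempty X := by
    by_contra h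
    rw [not_nonempty_iff] at h
    rw [Finset.sum_eq_zero (fun p _ => h.elim p.1)] at hsum
    norm_num at hsum
  obtain ⟨x₀⟩ := hXne
  -- intermediate value theorem to pick the mixing coefficient l
  have hmem : R - ε ∈ Set.Icc (condEnt (rJoint μXZ x₀ 1)) (condEnt (rJoint μXZ x₀ 0)) := by
    rw [condEnt_rJoint_one, condEnt_rJoint_zero]
    constructor <;> linarith
  obtain ⟨l, hl01, hleq⟩ := intermediate_value_Icc' (by norm_num : (0:ℝ) ≤ 1)
    (rJoint_cont μXZ x₀).continuousOn hmem
  obtain ⟨hl0, hl1⟩ := hl01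
  -- the joint distribution
  have hmarg : ∀ x z, (∑ x' : X, ∑ z' : Z,
      (if z' = z then coefC x₀ l x x' else 0) * μXZ (x, z)) = μXZ (x, z) := by
    intro x z
    calc ∑ x' : X, ∑ z' : Z,
          (if z' = z then coefC x₀ l x x' else 0) * μXZ (x, z)
        = ∑ x' : X, coefC x₀ l x x' * μXZ (x, z) := by
          refine Finset.sum_congr rfl fun x' _ => ?_
          simp [ite_mul, zero_mul, Finset.sum_ite_eq']
      _ = μXZ (x, z) := by rw [← Finset.sum_mul, coefC_sum, one_mul]
  refine ⟨fun p => (if p.2.2.2 = p.2.1 then coefC x₀ l p.1 p.2.2.1 else 0) * μXZ (p.1, p.2.1),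
    Prod.snd, ?_, ?_, ?_, ?_, ?_⟩
  · intro p
    have := coefC_nonneg x₀ hl0 hl1 p.1 p.2.2.1
    have := hnn (p.1, p.2.1)
    positivity
  · simp only [Fintype.sum_prod_type]
    simp_rw [hmarg]
    rw [← Fintype.sum_prod_type]
    exact hsum
  · intro x z
    rw [Fintype.sum_prod_type]
    exact hmarg x z
  · have hfun : (fun p : X × (X × Z) =>
        ∑ z, (if p.2.2 = z then coefC x₀ l p.1 p.2.1 else 0) * μXZ (p.1, z))
        = rJoint μXZ x₀ l := by
      funext p
      obtain ⟨x, x', z'⟩ := p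
      simp [rJoint, ite_mul, zero_mul, Finset.sum_ite_eq]
    rw [hfun]
    exact hleq
  · intro x z zt hpos
    obtain ⟨x', z'⟩ := zt
    by_contra hne
    simp only at hne
    have : z' ≠ z := hne
    simp [this] at hpos
end

section
/- Let (X,Z) be a pair of random variables with finite alphabets X and Z and joint distribution μ_{XZ}, and let R' satisfy 0 ≤ R' ≤ H(X|Z). Then there exists a random variable X' taking values in X, defined jointly with (X,Z) via a conditional distribution p_{X'|XZ} (so the joint law is p_{XX'Z}(x,x',z) = μ_{XZ}(x,z) p_{X'|XZ}(x'|x,z)), such that H(X|X',Z) = R'. -/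
open Finset Filter

attribute [local instance] Classical.propDecidable

section Aux

lemma aux_mul_logb_div (a c : ℝ) (ha : 0 ≤ a) (hc : c ≠ 0) :
    a * Real.logb 2 (a / c) = a * Real.logb 2 a - a * Real.logb 2 c := by
  rcases ha.eq_or_lt with h|h
  · simp [← h]
  · rw [Real.logb_div h.ne' hc, mul_sub]

lemma aux_ent_continuous {α : Type*} [Fintype α] {p : ℝ → α → ℝ}
    (hp : ∀ a, Continuous fun t => p t a) :
    Continuous fun t => ent (p t) := by
  have hml : Continuous fun x : ℝ => x * Real.logb 2 x := by
    simpa [Real.logb, mul_div_assoc] using Real.continuous_mul_log.div_const (Real.log 2)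
  unfold ent
  exact continuous_finset_sum _ fun a _ => ((hml.comp (hp a)).neg)

lemma aux_sum_indep {X Z : Type} [Fintype X] [Fintype Z] (F : X × Z → ℝ) :
    ∑ p : X × (X × Z), F (p.1, p.2.2) = (Fintype.card X : ℝ) * ∑ q : X × Z, F q := by
  rw [Fintype.sum_prod_type]
  simp_rw [Fintype.sum_prod_type, Finset.sum_const, Finset.card_univ, nsmul_eq_mul]
  rw [Finset.mul_sum]

lemma aux_sum_indep2 {X Z : Type} [Fintype X] [Fintype Z] (G : Z → ℝ) :
    ∑ q : X × Z, G q.2 = (Fintype.card X : ℝ) * ∑ z, G z := by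
  rw [Fintype.sum_prod_type]
  simp [Finset.sum_const, Finset.card_univ, nsmul_eq_mul]

lemma aux_ent_scaled {α : Type*} [Fintype α] (μ : α → ℝ) (hnn : ∀ a, 0 ≤ μ a)
    (hs : ∑ a, μ a = 1) {c : ℝ} (hc : c ≠ 0) :
    c * ∑ a, -((μ a / c) * Real.logb 2 (μ a / c)) = ent μ + Real.logb 2 c := by
  rw [Finset.mul_sum]
  have step : ∀ a, c * -((μ a / c) * Real.logb 2 (μ a / c))
      = -(μ a * Real.logb 2 (μ a)) + μ a * Real.logb 2 c := by
    intro a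
    have h := aux_mul_logb_div (μ a) c (hnn a) hc
    have hm : c * (μ a / c) = μ a := by field_simp
    calc c * -((μ a / c) * Real.logb 2 (μ a / c))
        = -((c * (μ a / c)) * Real.logb 2 (μ a / c)) := by ring
      _ = -(μ a * Real.logb 2 (μ a / c)) := by rw [hm]
      _ = _ := by rw [h]; ring
  simp_rw [step]
  rw [Finset.sum_add_distrib, ← Finset.sum_mul, hs, one_mul, ent]

end Aux

/-- for 0 ≤ R' ≤ H(X|Z) there is a conditional distribution p_{X'|XZ}
such that, under the joint law p(x,x',z) = μ_{XZ}(x,z) p_{X'|XZ}(x'|x,z), one has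
H(X | X', Z) = R'. -/
theorem stmt15 {X Z : Type} [Fintype X] [Fintype Z]
    (μXZ : X × Z → ℝ) (hnn : ∀ p, 0 ≤ μXZ p) (hsum : ∑ p : X × Z, μXZ p = 1)
    (R' : ℝ) (hR0 : 0 ≤ R') (hR1 : R' ≤ condEnt μXZ) :
    ∃ k : X → Z → X → ℝ,
      (∀ x z, (∀ x', 0 ≤ k x z x') ∧ ∑ x', k x z x' = 1) ∧
      condEnt (fun p : X × (X × Z) => μXZ (p.1, p.2.2) * k p.1 p.2.2 p.2.1) = R' := by
  have hXne : Nonempty X := by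
    by_contra h
    rw [not_nonempty_iff] at h
    simp [Fintype.sum_prod_type] at hsum
  set c : ℝ := (Fintype.card X : ℝ) with hcdef
  have hc : 0 < c := by
    rw [hcdef]; exact_mod_cast Fintype.card_pos (α := X)
  have hcne : c ≠ 0 := ne_of_gt hc
  set K : ℝ → X → Z → X → ℝ :=
    fun t x z x' => (1 - t)/c + t * (if x' = x then 1 else 0) with hK
  set f : ℝ → ℝ := fun t =>
    condEnt (fun p : X × (X × Z) => μXZ (p.1, p.2.2) * K t p.1 p.2.2 p.2.1) with hf
  have hqc : ∀ p : X × (X × Z),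
      Continuous fun t => μXZ (p.1, p.2.2) * K t p.1 p.2.2 p.2.1 := by
    intro p; simp only [hK]; fun_prop
  have hcont : Continuous f := by
    have h1 : Continuous fun t =>
        ent (fun p : X × (X × Z) => μXZ (p.1, p.2.2) * K t p.1 p.2.2 p.2.1) :=
      aux_ent_continuous hqc
    have h2 : Continuous fun t =>
        ent (margSnd (fun p : X × (X × Z) => μXZ (p.1, p.2.2) * K t p.1 p.2.2 p.2.1)) := by
      apply aux_ent_continuous
      intro b
      exact continuous_finset_sum _ fun a _ => hqc (a, b)
    exact h1.sub h2
  have hmznn : ∀ z, 0 ≤ margSnd μXZ z := fun z =>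
    Finset.sum_nonneg fun x _ => hnn (x, z)
  have hsumZ : ∑ z, margSnd μXZ z = 1 := by
    rw [← hsum, Fintype.sum_prod_type]
    exact Finset.sum_comm
  have hf0 : f 0 = condEnt μXZ := by
    have e0 : (fun p : X × (X × Z) => μXZ (p.1, p.2.2) * K 0 p.1 p.2.2 p.2.1)
        = fun p => μXZ (p.1, p.2.2) / c := by
      funext p; simp only [hK]; ring
    have h1 : ent (fun p : X × (X × Z) => μXZ (p.1, p.2.2) / c)
        = ent μXZ + Real.logb 2 c :=
      calc ent (fun p : X × (X × Z) => μXZ (p.1, p.2.2) / c)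
          = ∑ p : X × (X × Z),
              -((μXZ (p.1, p.2.2) / c) * Real.logb 2 (μXZ (p.1, p.2.2) / c)) := rfl
        _ = c * ∑ q : X × Z, -((μXZ q / c) * Real.logb 2 (μXZ q / c)) :=
            aux_sum_indep (fun q => -((μXZ q / c) * Real.logb 2 (μXZ q / c)))
        _ = ent μXZ + Real.logb 2 c := aux_ent_scaled μXZ hnn hsum hcne
    have hm : margSnd (fun p : X × (X × Z) => μXZ (p.1, p.2.2) / c)
        = fun q : X × Z => margSnd μXZ q.2 / c := by
      funext q; simp [margSnd, Finset.sum_div]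
    have h2 : ent (margSnd (fun p : X × (X × Z) => μXZ (p.1, p.2.2) / c))
        = ent (margSnd μXZ) + Real.logb 2 c := by
      rw [hm]
      calc ent (fun q : X × Z => margSnd μXZ q.2 / c)
          = ∑ q : X × Z,
              -((margSnd μXZ q.2 / c) * Real.logb 2 (margSnd μXZ q.2 / c)) := rfl
        _ = c * ∑ z, -((margSnd μXZ z / c) * Real.logb 2 (margSnd μXZ z / c)) :=
            by rw [hcdef]; exact aux_sum_indep2 (X := X) (fun z => -(margSnd μXZ z / c * Real.logb 2 (margSnd μXZ z / c)))
        _ = ent (margSnd μXZ) + Real.logb 2 c :=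
            aux_ent_scaled (margSnd μXZ) hmznn hsumZ hcne
    simp only [hf, e0, condEnt, h1, h2]
    ring
  have hf1 : f 1 = 0 := by
    have e1 : (fun p : X × (X × Z) => μXZ (p.1, p.2.2) * K 1 p.1 p.2.2 p.2.1)
        = fun p => if p.2.1 = p.1 then μXZ (p.1, p.2.2) else 0 := by
      funext p; simp [hK, mul_ite]
    have h1 : ent (fun p : X × (X × Z) =>
        if p.2.1 = p.1 then μXZ (p.1, p.2.2) else 0) = ent μXZ := by
      calc ent (fun p : X × (X × Z) => if p.2.1 = p.1 then μXZ (p.1, p.2.2) else 0)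
          = ∑ p : X × (X × Z), (if p.2.1 = p.1 then
              -(μXZ (p.1, p.2.2) * Real.logb 2 (μXZ (p.1, p.2.2))) else 0) := by
            apply Finset.sum_congr rfl
            intro p _
            by_cases hp : p.2.1 = p.1 <;> simp [hp]
        _ = ent μXZ := by
            rw [Fintype.sum_prod_type]
            simp_rw [Fintype.sum_prod_type]
            rw [ent, Fintype.sum_prod_type]
            refine Finset.sum_congr rfl fun x _ => ?_
            rw [Finset.sum_comm]
            refine Finset.sum_congr rfl fun z _ => ?_
            simp
    have h2 : margSnd (fun p : X × (X × Z) =>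
        if p.2.1 = p.1 then μXZ (p.1, p.2.2) else 0) = μXZ := by
      funext q
      simp [margSnd]
    simp only [hf, e1, condEnt, h1, h2]
    ring
  have hmem : R' ∈ Set.Icc (f 1) (f 0) := by rw [hf0, hf1]; exact ⟨hR0, hR1⟩
  obtain ⟨t, ht, hft⟩ :=
    intermediate_value_Icc' (by norm_num : (0:ℝ) ≤ 1) hcont.continuousOn hmem
  refine ⟨K t, fun x z => ⟨fun x' => ?_, ?_⟩, hft⟩
  · have h1 : 0 ≤ (1 - t)/c := div_nonneg (by linarith [ht.2]) hc.le
    have h2 : 0 ≤ t * (if x' = x then (1:ℝ) else 0) :=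
      mul_nonneg ht.1 (by positivity)
    exact add_nonneg h1 h2
  · simp only [hK]
    rw [Finset.sum_add_distrib, Finset.sum_const, Finset.card_univ, nsmul_eq_mul,
        ← Finset.mul_sum]
    have : ∑ x' : X, (if x' = x then (1:ℝ) else 0) = 1 := by simp
    rw [this, mul_one]
    field_simp
    rw [hcdef]; ring
end

section
/- Let X and Y be finite alphabets, 𝒜 a finite set of functions A : Xⁿ → X^{l_A}, and p_A a probability distribution on 𝒜 satisfying condition (H4) with constants α_A, β_A ≥ 0. Let C be uniformly distributed on Im 𝒜 and independent of A ~ p_A. Then for every x ∈ Xⁿ and y ∈ Yⁿ, E_{A,C}[ χ(Ax = C) · χ(∃ x' ≠ x with Ax' = C and H(x'|y) ≤ H(x|y)) ] ≤ (1/|Im 𝒜|) · [ max{α_A, 1} · 2^{−n(|R_A − H(x|y)|⁺ − λ_{XY})} + β_A ], where R_A := (1/n) log|Im 𝒜|, λ_{XY} := |X||Y| log(n+1)/n, and |t|⁺ := max{t, 0}. -/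
open Finset Filter

attribute [local instance] Classical.propDecidable

noncomputable section Aux

lemma two_rpow_sum {ι : Type*} (s : Finset ι) (f : ι → ℝ) :
    (2:ℝ) ^ (∑ i ∈ s, f i) = ∏ i ∈ s, (2:ℝ) ^ f i := by
  classical
  induction s using Finset.cons_induction with
  | empty => simp
  | cons a s ha ih => rw [Finset.sum_cons, Finset.prod_cons, Real.rpow_add (by norm_num), ih]

variable {X Y : Type} [Fintype X] [Fintype Y]

def cnt {n : ℕ} (y : Fin n → Y) (x : Fin n → X) (p : X × Y) : ℕ :=
  (Finset.univ.filter fun i => x i = p.1 ∧ y i = p.2).card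

lemma jointType_eq_cnt {n : ℕ} (y : Fin n → Y) (x : Fin n → X) (p : X × Y) :
    jointType x y p = (cnt y x p : ℝ) / n := rfl

lemma jointType_nonneg {n : ℕ} (y : Fin n → Y) (x : Fin n → X) (p : X × Y) :
    0 ≤ jointType x y p := by
  rw [jointType_eq_cnt]; positivity

lemma cnt_cast {n : ℕ} (hn : n ≠ 0) (y : Fin n → Y) (x : Fin n → X) (p : X × Y) :
    (cnt y x p : ℝ) = n * jointType x y p := by
  rw [jointType_eq_cnt]
  field_simp

lemma jointType_le_margSnd {n : ℕ} (y : Fin n → Y) (x : Fin n → X) (p : X × Y) :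
    jointType x y p ≤ margSnd (jointType x y) p.2 := by
  have h : jointType x y (p.1, p.2) ≤ ∑ a, jointType x y (a, p.2) :=
    Finset.single_le_sum (fun a _ => jointType_nonneg y x (a, p.2)) (Finset.mem_univ p.1)
  simpa [margSnd] using h

lemma margSnd_nonneg {n : ℕ} (y : Fin n → Y) (x : Fin n → X) (b : Y) :
    0 ≤ margSnd (jointType x y) b :=
  Finset.sum_nonneg fun a _ => jointType_nonneg y x (a, b)

lemma jointType_pos {n : ℕ} (y : Fin n → Y) (x : Fin n → X) (i : Fin n) :
    0 < jointType x y (x i, y i) := by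
  rw [jointType_eq_cnt]
  have hc : 0 < cnt y x (x i, y i) := by
    refine Finset.card_pos.mpr ⟨i, ?_⟩
    simp [cnt]
  have hn : (0:ℝ) < n := by exact_mod_cast i.pos
  positivity

lemma margSnd_pos {n : ℕ} (y : Fin n → Y) (x : Fin n → X) (i : Fin n) :
    0 < margSnd (jointType x y) (y i) :=
  lt_of_lt_of_le (jointType_pos y x i) (jointType_le_margSnd y x (x i, y i))

lemma sum_condProb {n : ℕ} (y : Fin n → Y) (x : Fin n → X) (i : Fin n) :
    ∑ a, condProb (jointType x y) a (y i) = 1 := by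
  have h : ∑ a, jointType x y (a, y i) = margSnd (jointType x y) (y i) := rfl
  rw [show (∑ a, condProb (jointType x y) a (y i))
      = (∑ a, jointType x y (a, y i)) / margSnd (jointType x y) (y i) by
    rw [Finset.sum_div]; rfl]
  rw [h, div_self (margSnd_pos y x i).ne']

lemma empCondEnt_eq {n : ℕ} (x : Fin n → X) (y : Fin n → Y) :
    empCondEnt x y
      = -∑ p : X × Y, jointType x y p * Real.logb 2 (condProb (jointType x y) p.1 p.2) := by
  have key : ∀ p : X × Y,
      jointType x y p * Real.logb 2 (condProb (jointType x y) p.1 p.2)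
        = jointType x y p * Real.logb 2 (jointType x y p)
          - jointType x y p * Real.logb 2 (margSnd (jointType x y) p.2) := by
    intro p
    rcases eq_or_ne (jointType x y p) 0 with h | h
    · simp [h]
    · have hP : 0 < jointType x y p := lt_of_le_of_ne (jointType_nonneg y x p) (Ne.symm h)
      have hm : margSnd (jointType x y) p.2 ≠ 0 :=
        (lt_of_lt_of_le hP (jointType_le_margSnd y x p)).ne'
      rw [condProb, show jointType x y (p.1, p.2) = jointType x y p by rw [Prod.mk.eta],
        Real.logb_div h hm]
      ring
  rw [Finset.sum_congr rfl fun p _ => key p, Finset.sum_sub_distrib]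
  have h2 : ∑ p : X × Y, jointType x y p * Real.logb 2 (margSnd (jointType x y) p.2)
      = ∑ b, margSnd (jointType x y) b * Real.logb 2 (margSnd (jointType x y) b) := by
    rw [Fintype.sum_prod_type_right]
    refine Finset.sum_congr rfl fun b _ => ?_
    show (∑ a : X, jointType x y (a, b) * Real.logb 2 (margSnd (jointType x y) b)) = _
    rw [← Finset.sum_mul]
    rfl
  rw [h2]
  unfold empCondEnt condEnt ent
  rw [Finset.sum_neg_distrib, Finset.sum_neg_distrib]
  ring

lemma prod_condProb_eq {n : ℕ} (hn : n ≠ 0) (y : Fin n → Y) (x₀ x' : Fin n → X)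
    (h : ∀ p : X × Y, cnt y x' p = cnt y x₀ p) :
    ∏ i, condProb (jointType x₀ y) (x' i) (y i)
      = (2:ℝ) ^ (-(n:ℝ) * empCondEnt x₀ y) := by
  set P := jointType x₀ y with hPdef
  have key : ∏ i, condProb P (x' i) (y i) = ∏ p : X × Y, condProb P p.1 p.2 ^ cnt y x' p := by
    rw [← Finset.prod_fiberwise Finset.univ (fun i => (x' i, y i))
      (fun i => condProb P (x' i) (y i))]
    refine Finset.prod_congr rfl fun p _ => ?_
    have hcard : (Finset.univ.filter fun i => (x' i, y i) = p).card = cnt y x' p := by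
      unfold cnt; congr 1; ext i; simp [Prod.ext_iff]
    rw [Finset.prod_congr rfl (fun i hi => ?_), Finset.prod_const, hcard]
    have hi' : (x' i, y i) = p := (Finset.mem_filter.mp hi).2
    rw [← hi']
  have key2 : ∀ p : X × Y, condProb P p.1 p.2 ^ cnt y x' p
      = (2:ℝ) ^ ((cnt y x' p : ℝ) * Real.logb 2 (condProb P p.1 p.2)) := by
    intro p
    rcases Nat.eq_zero_or_pos (cnt y x' p) with h0 | h0
    · simp [h0]
    · have hP : 0 < P p := by
        rw [hPdef, jointType_eq_cnt, ← h p]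
        have : (0:ℝ) < n := by positivity
        positivity
      have hq : 0 < condProb P p.1 p.2 := by
        have hm : 0 < margSnd P p.2 := lt_of_lt_of_le hP (jointType_le_margSnd y x₀ p)
        have : P (p.1, p.2) = P p := by rw [Prod.mk.eta]
        rw [condProb, this]
        exact div_pos hP hm
      rw [mul_comm, Real.rpow_mul (by norm_num),
        Real.rpow_logb (by norm_num) (by norm_num) hq, Real.rpow_natCast]
  rw [key, Finset.prod_congr rfl fun p _ => key2 p, ← two_rpow_sum]
  congr 1
  rw [empCondEnt_eq x₀ y]
  have : ∀ p : X × Y, (cnt y x' p : ℝ) * Real.logb 2 (condProb P p.1 p.2)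
      = (n:ℝ) * (P p * Real.logb 2 (condProb P p.1 p.2)) := by
    intro p
    rw [h p, cnt_cast hn]
    ring
  rw [Finset.sum_congr rfl fun p _ => this p, ← Finset.mul_sum]
  ring

lemma class_card_le {n : ℕ} (hn : n ≠ 0) (y : Fin n → Y) (x₀ : Fin n → X)
    (s : Finset (Fin n → X)) (hs : ∀ x' ∈ s, ∀ p : X × Y, cnt y x' p = cnt y x₀ p) :
    (s.card : ℝ) ≤ (2:ℝ) ^ ((n:ℝ) * empCondEnt x₀ y) := by
  have hvpos : (0:ℝ) < (2:ℝ) ^ (-(n:ℝ) * empCondEnt x₀ y) :=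
    Real.rpow_pos_of_pos (by norm_num) _
  have hsum : (s.card : ℝ) * (2:ℝ) ^ (-(n:ℝ) * empCondEnt x₀ y) ≤ 1 := by
    calc (s.card : ℝ) * (2:ℝ) ^ (-(n:ℝ) * empCondEnt x₀ y)
        = ∑ x' ∈ s, ∏ i, condProb (jointType x₀ y) (x' i) (y i) := by
          rw [Finset.sum_congr rfl fun x' hx' => prod_condProb_eq hn y x₀ x' (hs x' hx'),
            Finset.sum_const, nsmul_eq_mul]
      _ ≤ ∑ x' : Fin n → X, ∏ i, condProb (jointType x₀ y) (x' i) (y i) := by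
          refine Finset.sum_le_sum_of_subset_of_nonneg (Finset.subset_univ s) ?_
          intro x' _ _
          refine Finset.prod_nonneg fun i _ => ?_
          exact div_nonneg (jointType_nonneg y x₀ _) (margSnd_nonneg y x₀ _)
      _ = ∏ i, ∑ a, condProb (jointType x₀ y) a (y i) := by
          rw [Finset.prod_univ_sum fun _ => (Finset.univ : Finset X)]
          rw [Fintype.piFinset_univ]
      _ = 1 := by
          rw [Finset.prod_congr rfl fun i _ => sum_condProb y x₀ i, Finset.prod_const_one]
  have h1 : (s.card : ℝ) ≤ 1 / (2:ℝ) ^ (-(n:ℝ) * empCondEnt x₀ y) := by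
    rw [le_div_iff₀ hvpos]; exact hsum
  calc (s.card : ℝ) ≤ 1 / (2:ℝ) ^ (-(n:ℝ) * empCondEnt x₀ y) := h1
    _ = (2:ℝ) ^ ((n:ℝ) * empCondEnt x₀ y) := by
        rw [one_div, ← Real.rpow_neg (by norm_num)]
        ring_nf

lemma count_entropy_le {n : ℕ} (hn : n ≠ 0) (x : Fin n → X) (y : Fin n → Y) :
    ((Finset.univ.filter fun x' : Fin n → X => empCondEnt x' y ≤ empCondEnt x y).card : ℝ)
      ≤ ((n:ℝ) + 1) ^ (Fintype.card X * Fintype.card Y)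
        * (2:ℝ) ^ ((n:ℝ) * empCondEnt x y) := by
  set S := Finset.univ.filter fun x' : Fin n → X => empCondEnt x' y ≤ empCondEnt x y with hS
  have hcntlt : ∀ (x' : Fin n → X) (p : X × Y), cnt y x' p < n + 1 := by
    intro x' p
    refine Nat.lt_succ_of_le (le_trans (Finset.card_filter_le _ _) ?_)
    simp
  set Nf : (Fin n → X) → (X × Y → Fin (n + 1)) := fun x' p => ⟨cnt y x' p, hcntlt x' p⟩
    with hNf
  have hcard := Finset.card_eq_sum_card_image Nf S
  have hfiber : ∀ t ∈ S.image Nf,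
      ((S.filter fun x' => Nf x' = t).card : ℝ) ≤ (2:ℝ) ^ ((n:ℝ) * empCondEnt x y) := by
    intro t ht
    obtain ⟨x₀, hx₀S, hx₀t⟩ := Finset.mem_image.mp ht
    have hx₀ : empCondEnt x₀ y ≤ empCondEnt x y := (Finset.mem_filter.mp hx₀S).2
    have step := class_card_le hn y x₀ (S.filter fun x' => Nf x' = t) ?_
    · refine step.trans ?_
      refine Real.rpow_le_rpow_of_exponent_le (by norm_num) ?_
      have : (0:ℝ) ≤ n := by positivity
      nlinarith
    · intro x' hx' p
      have h1 : Nf x' = Nf x₀ := ((Finset.mem_filter.mp hx').2).trans hx₀t.symm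
      have h2 := congrArg Fin.val (congrFun h1 p)
      simpa [hNf] using h2
  have himg : ((S.image Nf).card : ℝ)
      ≤ ((n:ℝ) + 1) ^ (Fintype.card X * Fintype.card Y) := by
    have h1 : (S.image Nf).card ≤ Fintype.card (X × Y → Fin (n + 1)) := by
      rw [← Finset.card_univ]
      exact Finset.card_le_card (Finset.subset_univ _)
    have h2 : Fintype.card (X × Y → Fin (n + 1)) = (n + 1) ^ (Fintype.card X * Fintype.card Y) := by
      rw [Fintype.card_fun, Fintype.card_fin, Fintype.card_prod]
    rw [h2] at h1
    calc ((S.image Nf).card : ℝ) ≤ (((n + 1) ^ (Fintype.card X * Fintype.card Y) : ℕ) : ℝ) := by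
          exact_mod_cast h1
      _ = ((n:ℝ) + 1) ^ (Fintype.card X * Fintype.card Y) := by push_cast; ring
  calc (S.card : ℝ) = ∑ t ∈ S.image Nf, ((S.filter fun x' => Nf x' = t).card : ℝ) := by
        rw [hcard]; push_cast; rfl
    _ ≤ ∑ _t ∈ S.image Nf, (2:ℝ) ^ ((n:ℝ) * empCondEnt x y) := Finset.sum_le_sum hfiber
    _ = ((S.image Nf).card : ℝ) * (2:ℝ) ^ ((n:ℝ) * empCondEnt x y) := by
        rw [Finset.sum_const, nsmul_eq_mul]
    _ ≤ ((n:ℝ) + 1) ^ (Fintype.card X * Fintype.card Y) * (2:ℝ) ^ ((n:ℝ) * empCondEnt x y) := by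
        refine mul_le_mul_of_nonneg_right himg ?_
        positivity

end Aux


/-- a bound on E_{A,C}[χ(Ax = C)·χ(∃ x' ≠ x with Ax' = C and
H(x'|y) ≤ H(x|y))] for an ensemble satisfying (H4), with C uniform on Im 𝒜. -/
theorem stmt16 {X Y : Type} [Fintype X] [Fintype Y] (n lA : ℕ)
    (𝒜 : Finset ((Fin n → X) → Fin lA → X)) (pA : ((Fin n → X) → Fin lA → X) → ℝ)
    (hnn : ∀ A, 0 ≤ pA A) (hsum : ∑ A ∈ 𝒜, pA A = 1)
    (αA βA : ℝ) (hα : 0 ≤ αA) (hβ : 0 ≤ βA)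
    (hH4 : H4Cond 𝒜 id pA αA βA)
    (x : Fin n → X) (y : Fin n → Y) :
    ∑ A ∈ 𝒜, ∑ c ∈ ImSet 𝒜 id,
        pA A * unifOn (ImSet 𝒜 id) c *
          ((if A x = c then 1 else 0) *
            (if ∃ x' : Fin n → X, x' ≠ x ∧ A x' = c ∧ empCondEnt x' y ≤ empCondEnt x y
             then 1 else 0))
      ≤ (1 / ((ImSet 𝒜 id).card : ℝ)) *
          (max αA 1 *
              (2 : ℝ) ^ (-(n : ℝ) *
                (max (Real.logb 2 ((ImSet 𝒜 id).card : ℝ) / n - empCondEnt x y) 0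
                  - (Fintype.card X : ℝ) * (Fintype.card Y : ℝ) * Real.logb 2 (n + 1) / n))
            + βA) := by
  classical
  have h𝒜 : 𝒜.Nonempty := by
    by_contra h
    rw [Finset.not_nonempty_iff_eq_empty] at h
    rw [h] at hsum
    simp at hsum
  have hAxIm : ∀ A ∈ 𝒜, A x ∈ ImSet 𝒜 id := by
    intro A hA
    simp only [ImSet, Finset.mem_biUnion, Finset.mem_image]
    exact ⟨A, hA, x, Finset.mem_univ x, rfl⟩
  have hM : (0:ℝ) < ((ImSet 𝒜 id).card : ℝ) := by
    obtain ⟨A, hA⟩ := h𝒜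
    exact_mod_cast Finset.card_pos.mpr ⟨A x, hAxIm A hA⟩
  -- the exponent
  set E : ℝ := -(n : ℝ) *
      (max (Real.logb 2 ((ImSet 𝒜 id).card : ℝ) / n - empCondEnt x y) 0
        - (Fintype.card X : ℝ) * (Fintype.card Y : ℝ) * Real.logb 2 (n + 1) / n) with hE
  have hEpos : (0:ℝ) < (2:ℝ) ^ E := Real.rpow_pos_of_pos (by norm_num) _
  have inner : ∀ A ∈ 𝒜,
      (∑ c ∈ ImSet 𝒜 id, pA A * unifOn (ImSet 𝒜 id) c *
          ((if A x = c then 1 else 0) *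
            (if ∃ x' : Fin n → X, x' ≠ x ∧ A x' = c ∧ empCondEnt x' y ≤ empCondEnt x y
             then 1 else 0)))
        = pA A * (1 / ((ImSet 𝒜 id).card : ℝ)) *
            (if ∃ x' : Fin n → X, x' ≠ x ∧ A x' = A x ∧ empCondEnt x' y ≤ empCondEnt x y
             then (1:ℝ) else 0) := by
    intro A hA
    rw [Finset.sum_eq_single_of_mem (A x) (hAxIm A hA)]
    · rw [if_pos rfl, unifOn, if_pos (hAxIm A hA)]
      ring
    · intro c _ hne
      rw [if_neg (fun h => hne h.symm)]
      ring
  have MAIN : ∑ A ∈ 𝒜, pA A *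
      (if ∃ x' : Fin n → X, x' ≠ x ∧ A x' = A x ∧ empCondEnt x' y ≤ empCondEnt x y
       then (1:ℝ) else 0) ≤ max αA 1 * (2:ℝ) ^ E + βA := by
    rcases Nat.eq_zero_or_pos n with hn0 | hn0
    · -- n = 0 : no x' ≠ x exists
      subst hn0
      have hno : ∀ A : (Fin 0 → X) → Fin lA → X,
          ¬ (∃ x' : Fin 0 → X, x' ≠ x ∧ A x' = A x ∧ empCondEnt x' y ≤ empCondEnt x y) := by
        rintro A ⟨x', hne, -, -⟩
        exact hne (funext fun i => i.elim0)
      have hz : ∑ A ∈ 𝒜, pA A *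
          (if ∃ x' : Fin 0 → X, x' ≠ x ∧ A x' = A x ∧ empCondEnt x' y ≤ empCondEnt x y
           then (1:ℝ) else 0) = 0 :=
        Finset.sum_eq_zero fun A _ => by rw [if_neg (hno A), mul_zero]
      rw [hz]
      have hmax : (0:ℝ) < max αA 1 := lt_of_lt_of_le one_pos (le_max_right _ _)
      nlinarith [mul_pos hmax hEpos]
    · have hn : (n:ℝ) ≠ 0 := by positivity
      by_cases hRH : Real.logb 2 ((ImSet 𝒜 id).card : ℝ) / n - empCondEnt x y ≤ 0
      · -- small rate case : bound by 1
        have hEeq : E = (n:ℝ) *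
            ((Fintype.card X : ℝ) * (Fintype.card Y : ℝ) * Real.logb 2 (n + 1) / n) := by
          rw [hE, max_eq_right hRH]; ring
        have hle1 : ∑ A ∈ 𝒜, pA A *
            (if ∃ x' : Fin n → X, x' ≠ x ∧ A x' = A x ∧ empCondEnt x' y ≤ empCondEnt x y
             then (1:ℝ) else 0) ≤ 1 := by
          refine le_trans (Finset.sum_le_sum fun A _ => ?_) (le_of_eq hsum)
          split_ifs with h
          · rw [mul_one]
          · rw [mul_zero]; exact hnn A
        have hlog : (0:ℝ) ≤ Real.logb 2 ((n:ℝ) + 1) :=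
          Real.logb_nonneg (by norm_num)
            (by have : (0:ℝ) ≤ n := Nat.cast_nonneg n; linarith)
        have hEnn : (0:ℝ) ≤ E := by
          rw [hEeq]; positivity
        have h2 : (1:ℝ) ≤ (2:ℝ) ^ E := by
          calc (1:ℝ) = (2:ℝ) ^ (0:ℝ) := by rw [Real.rpow_zero]
            _ ≤ (2:ℝ) ^ E := Real.rpow_le_rpow_of_exponent_le (by norm_num) hEnn
        have hmax1 : (1:ℝ) ≤ max αA 1 := le_max_right _ _
        nlinarith
      · -- large rate case : use H4 and type counting
        push_neg at hRH
        have hEeq : E = -(n:ℝ) *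
            ((Real.logb 2 ((ImSet 𝒜 id).card : ℝ) / n - empCondEnt x y)
              - (Fintype.card X : ℝ) * (Fintype.card Y : ℝ) * Real.logb 2 (n + 1) / n) := by
          rw [hE, max_eq_left hRH.le]
        set T' := Finset.univ.filter
            (fun x' : Fin n → X => x' ≠ x ∧ empCondEnt x' y ≤ empCondEnt x y) with hT'
        have hpoint : ∀ A ∈ 𝒜, pA A *
            (if ∃ x' : Fin n → X, x' ≠ x ∧ A x' = A x ∧ empCondEnt x' y ≤ empCondEnt x y
             then (1:ℝ) else 0)
            ≤ ∑ x' ∈ T', (@ite ℝ (A x = A x') (Classical.propDecidable _) (pA A) 0) := by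
          intro A hA
          have hterm : ∀ x'' : Fin n → X, (0:ℝ) ≤ (@ite ℝ (A x = A x'') (Classical.propDecidable _) (pA A) 0) := by
            intro x''; split_ifs; exacts [hnn A, le_rfl]
          split_ifs with h
          · obtain ⟨x', hne, hax, hent⟩ := h
            have hmem : x' ∈ T' := Finset.mem_filter.mpr ⟨Finset.mem_univ _, hne, hent⟩
            rw [mul_one]
            calc pA A = (@ite ℝ (A x = A x') (Classical.propDecidable _) (pA A) 0) := by rw [if_pos hax.symm]
              _ ≤ ∑ x'' ∈ T', (@ite ℝ (A x = A x'') (Classical.propDecidable _) (pA A) 0) :=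
                  Finset.single_le_sum (fun x'' _ => hterm x'') hmem
          · rw [mul_zero]
            exact Finset.sum_nonneg fun x'' _ => hterm x''
        have hsum2 : ∑ A ∈ 𝒜, pA A *
            (if ∃ x' : Fin n → X, x' ≠ x ∧ A x' = A x ∧ empCondEnt x' y ≤ empCondEnt x y
             then (1:ℝ) else 0)
            ≤ ∑ x' ∈ T', ∑ A ∈ 𝒜, (@ite ℝ (A x = A x') (Classical.propDecidable _) (pA A) 0) := by
          calc _ ≤ ∑ A ∈ 𝒜, ∑ x' ∈ T', (@ite ℝ (A x = A x') (Classical.propDecidable _) (pA A) 0) :=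
                Finset.sum_le_sum hpoint
            _ = ∑ x' ∈ T', ∑ A ∈ 𝒜, (@ite ℝ (A x = A x') (Classical.propDecidable _) (pA A) 0) := Finset.sum_comm
        -- H4 with T = {x}
        have hH4' := hH4 {x} T'
        rw [Finset.sum_singleton] at hH4'
        simp only [id_eq] at hH4'
        have hxnot : x ∉ T' := by simp [hT']
        have hinter : (({x} : Finset (Fin n → X)) ∩ T').card = 0 := by
          rw [Finset.card_eq_zero]
          exact Finset.singleton_inter_of_notMem hxnot
        rw [hinter, Finset.card_singleton] at hH4'
        simp only [Finset.sum_filter] at hH4'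
        have hT'S : (T'.card : ℝ)
            ≤ ((n:ℝ) + 1) ^ (Fintype.card X * Fintype.card Y)
              * (2:ℝ) ^ ((n:ℝ) * empCondEnt x y) := by
          refine le_trans ?_ (count_entropy_le hn0.ne' x y)
          have hsub : T' ⊆ Finset.univ.filter
              fun x' : Fin n → X => empCondEnt x' y ≤ empCondEnt x y := by
            intro x' hx'
            exact Finset.mem_filter.mpr ⟨Finset.mem_univ _, (Finset.mem_filter.mp hx').2.2⟩
          exact_mod_cast Finset.card_le_card hsub
        push_cast at hH4'
        have hminβ : min (1:ℝ) (T'.card:ℝ) * βA ≤ βA := by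
          have h1 : min (1:ℝ) (T'.card:ℝ) ≤ 1 := min_le_left _ _
          nlinarith
        have hpow : (2:ℝ) ^ E
            = ((n:ℝ) + 1) ^ (Fintype.card X * Fintype.card Y)
              * (2:ℝ) ^ ((n:ℝ) * empCondEnt x y) / ((ImSet 𝒜 id).card : ℝ) := by
          have hexp : E = ((Fintype.card X * Fintype.card Y : ℕ) : ℝ)
                * Real.logb 2 ((n:ℝ) + 1)
              + ((n:ℝ) * empCondEnt x y
                + (- Real.logb 2 ((ImSet 𝒜 id).card : ℝ))) := by
            rw [hEeq]
            push_cast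
            field_simp
            ring
          rw [hexp, Real.rpow_add (by norm_num), Real.rpow_add (by norm_num)]
          have h1 : (2:ℝ) ^ (((Fintype.card X * Fintype.card Y : ℕ) : ℝ)
                * Real.logb 2 ((n:ℝ) + 1))
              = ((n:ℝ) + 1) ^ (Fintype.card X * Fintype.card Y) := by
            rw [mul_comm, Real.rpow_mul (by norm_num),
              Real.rpow_logb (by norm_num) (by norm_num) (by positivity),
              Real.rpow_natCast]
          have h2 : (2:ℝ) ^ (- Real.logb 2 ((ImSet 𝒜 id).card : ℝ))
              = (((ImSet 𝒜 id).card : ℝ))⁻¹ := by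
            rw [Real.rpow_neg (by norm_num), Real.rpow_logb (by norm_num) (by norm_num) hM]
          rw [h1, h2]
          ring
        have hchain : ∑ A ∈ 𝒜, pA A *
            (if ∃ x' : Fin n → X, x' ≠ x ∧ A x' = A x ∧ empCondEnt x' y ≤ empCondEnt x y
             then (1:ℝ) else 0)
            ≤ (T'.card:ℝ) * αA / ((ImSet 𝒜 id).card : ℝ) + βA := by
          refine hsum2.trans (le_trans (le_of_eq (by congr!)) (hH4'.trans ?_))
          have hq : (1 * (T'.card:ℝ) * αA) / ((ImSet 𝒜 id).card : ℝ)
              = (T'.card:ℝ) * αA / ((ImSet 𝒜 id).card : ℝ) := by ring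
          rw [hq]
          linarith
        refine hchain.trans ?_
        rw [hpow]
        have hQnn : (0:ℝ) ≤ ((n:ℝ) + 1) ^ (Fintype.card X * Fintype.card Y)
            * (2:ℝ) ^ ((n:ℝ) * empCondEnt x y) := by positivity
        have hstep : (T'.card:ℝ) * αA
            ≤ (((n:ℝ) + 1) ^ (Fintype.card X * Fintype.card Y)
                * (2:ℝ) ^ ((n:ℝ) * empCondEnt x y)) * max αA 1 := by
          calc (T'.card:ℝ) * αA
              ≤ (((n:ℝ) + 1) ^ (Fintype.card X * Fintype.card Y)
                  * (2:ℝ) ^ ((n:ℝ) * empCondEnt x y)) * αA :=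
                mul_le_mul_of_nonneg_right hT'S hα
            _ ≤ _ := mul_le_mul_of_nonneg_left (le_max_left _ _) hQnn
        have h3 : (T'.card:ℝ) * αA / ((ImSet 𝒜 id).card : ℝ)
            ≤ (((n:ℝ) + 1) ^ (Fintype.card X * Fintype.card Y)
                * (2:ℝ) ^ ((n:ℝ) * empCondEnt x y)) * max αA 1
              / ((ImSet 𝒜 id).card : ℝ) := by
          gcongr
        have h4 : (((n:ℝ) + 1) ^ (Fintype.card X * Fintype.card Y)
                * (2:ℝ) ^ ((n:ℝ) * empCondEnt x y)) * max αA 1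
              / ((ImSet 𝒜 id).card : ℝ)
            = max αA 1 * (((n:ℝ) + 1) ^ (Fintype.card X * Fintype.card Y)
                * (2:ℝ) ^ ((n:ℝ) * empCondEnt x y) / ((ImSet 𝒜 id).card : ℝ)) := by
          ring
        rw [h4] at h3
        linarith
  calc ∑ A ∈ 𝒜, ∑ c ∈ ImSet 𝒜 id,
        pA A * unifOn (ImSet 𝒜 id) c *
          ((if A x = c then 1 else 0) *
            (if ∃ x' : Fin n → X, x' ≠ x ∧ A x' = c ∧ empCondEnt x' y ≤ empCondEnt x y
             then 1 else 0))
      = ∑ A ∈ 𝒜, pA A * (1 / ((ImSet 𝒜 id).card : ℝ)) *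
          (if ∃ x' : Fin n → X, x' ≠ x ∧ A x' = A x ∧ empCondEnt x' y ≤ empCondEnt x y
           then (1:ℝ) else 0) := Finset.sum_congr rfl inner
    _ = (1 / ((ImSet 𝒜 id).card : ℝ)) * (∑ A ∈ 𝒜, pA A *
          (if ∃ x' : Fin n → X, x' ≠ x ∧ A x' = A x ∧ empCondEnt x' y ≤ empCondEnt x y
           then (1:ℝ) else 0)) := by
        rw [Finset.mul_sum]
        exact Finset.sum_congr rfl fun A _ => by ring
    _ ≤ (1 / ((ImSet 𝒜 id).card : ℝ)) * (max αA 1 * (2:ℝ) ^ E + βA) :=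
        mul_le_mul_of_nonneg_left MAIN (by positivity)
end
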